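/- Let p be a prime, e ≥ 1, and A, B ∈ R = ℤ/p^eℤ. For every X ∈ R with p ∣ X there exists a unique Z ∈ R such that p ∣ Z and Z = X³ + A·X·Z² + B·Z³. -/
import Mathlib

/-- For every `X ∈ ℤ/p^eℤ` divisible by `p` there is a unique `Z` divisible by `p`
satisfying the dehomogenized Weierstrass equation `Z = X³ + AXZ² + BZ³`. -/
theorem existsUnique_infinity_Z_coordinate
    {p : ℕ} (hp : p.Prime) {e : ℕ} (he : 1 ≤ e)
    (A B : ZMod (p ^ e)) (X : ZMod (p ^ e)) (hX : (p : ZMod (p ^ e)) ∣ X) :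
    ∃! Z : ZMod (p ^ e),
      (p : ZMod (p ^ e)) ∣ Z ∧ Z = X ^ 3 + A * X * Z ^ 2 + B * Z ^ 3 := by
  set π : ZMod (p ^ e) := (p : ZMod (p ^ e)) with hπ
  have hπe : π ^ e = 0 := by
    rw [hπ, ← Nat.cast_pow, ZMod.natCast_self]
  set F : ZMod (p ^ e) → ZMod (p ^ e) := fun Z => X ^ 3 + A * X * Z ^ 2 + B * Z ^ 3 with hF
  have h3 : (3 : ℕ) ≠ 0 := by norm_num
  have h2 : (2 : ℕ) ≠ 0 := by norm_num
  -- contraction property of F on the ideal (π)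
  have contra : ∀ Z Z' : ZMod (p ^ e), π ∣ Z → π ∣ Z' →
      ∃ c, π ∣ c ∧ F Z - F Z' = (Z - Z') * c := by
    intro Z Z' hZ hZ'
    refine ⟨A * X * (Z + Z') + B * (Z ^ 2 + Z * Z' + Z' ^ 2), ?_, by simp only [hF]; ring⟩
    exact dvd_add ((hX.mul_left A).mul_right _)
      (Dvd.dvd.mul_left (dvd_add (dvd_add (dvd_pow hZ h2) (hZ.mul_right Z'))
        (dvd_pow hZ' h2)) B)
  -- the iterates stay in (π)
  have hFdvd : ∀ z : ZMod (p ^ e), π ∣ z → π ∣ F z := by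
    intro z hz
    exact dvd_add (dvd_add (hX.trans (dvd_pow_self X h3))
      ((hX.mul_left A).mul_right _)) (Dvd.dvd.mul_left (dvd_pow hz h3) B)
  have hdvd : ∀ n, π ∣ F^[n] (0 : ZMod (p ^ e)) := by
    intro n
    induction n with
    | zero => simp
    | succ n ih => rw [Function.iterate_succ_apply']; exact hFdvd _ ih
  -- successive differences are divisible by increasing powers of π
  have hdiff : ∀ n, π ^ (n + 1) ∣ F^[n + 1] (0 : ZMod (p ^ e)) - F^[n] (0 : ZMod (p ^ e)) := by
    intro n
    induction n with
    | zero =>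
      rw [zero_add, pow_one, Function.iterate_one, Function.iterate_zero, id_eq, sub_zero]
      have hF0 : F 0 = X ^ 3 := by simp [hF]
      rw [hF0]
      exact hX.trans (dvd_pow_self X h3)
    | succ n ih =>
      obtain ⟨c, hc, hceq⟩ := contra _ _ (hdvd (n + 1)) (hdvd n)
      have e2 : F^[n + 1] (0 : ZMod (p ^ e)) = F (F^[n] 0) :=
        Function.iterate_succ_apply' F n 0
      rw [← e2] at hceq
      rw [Function.iterate_succ_apply' F (n + 1), hceq, pow_succ]
      exact mul_dvd_mul ih hc
  -- the e-th iterate is a fixed point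
  have hfix : F (F^[e] (0 : ZMod (p ^ e))) = F^[e] 0 := by
    have h := hdiff e
    rw [Function.iterate_succ_apply' F e, pow_succ, hπe, zero_mul, zero_dvd_iff,
      sub_eq_zero] at h
    exact h
  have hfix' : F^[e] (0 : ZMod (p ^ e)) =
      X ^ 3 + A * X * (F^[e] (0 : ZMod (p ^ e))) ^ 2 + B * (F^[e] (0 : ZMod (p ^ e))) ^ 3 := by
    conv_lhs => rw [← hfix]
  refine ⟨F^[e] 0, ⟨hdvd e, hfix'⟩, ?_⟩
  rintro Z ⟨hZd, hZeq⟩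
  obtain ⟨c, hc, hceq⟩ := contra Z (F^[e] 0) hZd (hdvd e)
  have hZF : F Z = Z := hZeq.symm
  have h1 : (Z - F^[e] 0) * (1 - c) = 0 := by
    have hstep : Z - F^[e] (0 : ZMod (p ^ e)) = (Z - F^[e] 0) * c := by
      rw [← hceq, hZF, hfix]
    rw [mul_sub, mul_one, ← hstep, sub_self]
  have hcnil : IsNilpotent c := by
    obtain ⟨d, hd⟩ := hc
    exact ⟨e, by rw [hd, mul_pow, hπe, zero_mul]⟩
  obtain ⟨u, hu⟩ := hcnil.isUnit_one_sub
  have h2' : Z - F^[e] (0 : ZMod (p ^ e)) = 0 := by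
    have := congrArg (· * (↑u⁻¹ : ZMod (p ^ e))) h1
    simpa [← hu, mul_assoc] using this
  exact sub_eq_zero.mp h2'
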